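/- arXiv:2506.05827 — 3 statements merged into one kernel-verified Lean document; each statement's English description precedes it below -/
import Mathlib

section
/- The operator R_n satisfies the braid relation: (R_n ⊗ Id)(Id ⊗ R_n)(R_n ⊗ Id) = (Id ⊗ R_n)(R_n ⊗ Id)(Id ⊗ R_n) as endomorphisms of V_n ⊗ V_n ⊗ V_n. -/
/-!
Both sides of the braid relation are linear, so it suffices to compare them on the basis triples
`e_i ⊗ e_j ⊗ e_k`, where only the relative order of `i, j, k` matters. This leaves thirteen direct
computations. For pairwise distinct indices they go through for any coefficient `p` in place of
`q - q⁻¹`; when exactly two indices coincide they need `q ^ 2 = p * q + 1`, which is where `q ≠ 0`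
enters.
-/

open TensorProduct

namespace YangBaxter

variable {K ι M : Type*} [Field K] [AddCommGroup M] [Module K M]

def onFirstTwo (R : M ⊗[K] M →ₗ[K] M ⊗[K] M) : M ⊗[K] M ⊗[K] M →ₗ[K] M ⊗[K] M ⊗[K] M :=
  R.rTensor M

def onLastTwo (R : M ⊗[K] M →ₗ[K] M ⊗[K] M) : M ⊗[K] M ⊗[K] M →ₗ[K] M ⊗[K] M ⊗[K] M :=
  (TensorProduct.assoc K M M M).symm.toLinearMap ∘ₗ R.lTensor M ∘ₗ
    (TensorProduct.assoc K M M M).toLinearMap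

def BraidRelation (R : M ⊗[K] M →ₗ[K] M ⊗[K] M) : Prop :=
  onFirstTwo R ∘ₗ onLastTwo R ∘ₗ onFirstTwo R = onLastTwo R ∘ₗ onFirstTwo R ∘ₗ onLastTwo R

@[simp]
theorem onFirstTwo_tmul (R : M ⊗[K] M →ₗ[K] M ⊗[K] M) (x y z : M) :
    onFirstTwo R (x ⊗ₜ y ⊗ₜ z) = R (x ⊗ₜ y) ⊗ₜ z :=
  LinearMap.rTensor_tmul _ _ _ _

@[simp]
theorem onLastTwo_tmul (R : M ⊗[K] M →ₗ[K] M ⊗[K] M) (x y z : M) :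
    onLastTwo R (x ⊗ₜ y ⊗ₜ z) = (TensorProduct.assoc K M M M).symm (x ⊗ₜ R (y ⊗ₜ z)) := by
  simp [onLastTwo]

variable [LinearOrder ι]

def IsStandardRMatrix (b : ι → M) (q : K) (R : M ⊗[K] M →ₗ[K] M ⊗[K] M) : Prop :=
  ∀ i j, R (b i ⊗ₜ[K] b j) =
    if i < j then b j ⊗ₜ[K] b i
    else if i = j then q • (b j ⊗ₜ[K] b i)
    else (q - q⁻¹) • (b i ⊗ₜ[K] b j) + b j ⊗ₜ[K] b i

namespace IsStandardRMatrix

variable {b : ι → M} {q : K} {R : M ⊗[K] M →ₗ[K] M ⊗[K] M}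

theorem apply_of_lt (hR : IsStandardRMatrix b q R) {i j : ι} (h : i < j) :
    R (b i ⊗ₜ b j) = b j ⊗ₜ b i := by
  rw [hR, if_pos h]

theorem apply_self (hR : IsStandardRMatrix b q R) (i : ι) :
    R (b i ⊗ₜ b i) = q • (b i ⊗ₜ b i) := by
  rw [hR, if_neg (lt_irrefl i), if_pos rfl]

theorem apply_of_gt (hR : IsStandardRMatrix b q R) {i j : ι} (h : j < i) :
    R (b i ⊗ₜ b j) = (q - q⁻¹) • (b i ⊗ₜ b j) + b j ⊗ₜ b i := by
  rw [hR, if_neg h.asymm, if_neg h.ne']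

theorem braidRelation_tmul (hq : q ≠ 0) (hR : IsStandardRMatrix b q R) (i j k : ι) :
    onFirstTwo R (onLastTwo R (onFirstTwo R (b i ⊗ₜ b j ⊗ₜ b k))) =
      onLastTwo R (onFirstTwo R (onLastTwo R (b i ⊗ₜ b j ⊗ₜ b k))) := by
  rcases lt_trichotomy i j with hij | hij | hij <;>
    rcases lt_trichotomy j k with hjk | hjk | hjk <;>
    rcases lt_trichotomy i k with hik | hik | hik <;>
    try (exfalso; order)
  all_goals
    subst_vars
    simp (disch := assumption) only [onFirstTwo_tmul, onLastTwo_tmul, hR.apply_self,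
      hR.apply_of_lt, hR.apply_of_gt, map_add, map_smul, tmul_add, add_tmul, tmul_smul,
      ← smul_tmul', assoc_symm_tmul] <;>
    match_scalars <;> field_simp <;> ring

theorem braidRelation (b : Module.Basis ι K M) (hq : q ≠ 0) (hR : IsStandardRMatrix b q R) :
    BraidRelation R :=
  ((b.tensorProduct b).tensorProduct b).ext fun ⟨⟨i, j⟩, k⟩ => by
    simpa only [Module.Basis.tensorProduct_apply, LinearMap.comp_apply] using
      hR.braidRelation_tmul hq i j k

end IsStandardRMatrix

end YangBaxter

/-- The Yang–Baxter operator `R_n` satisfies the braid relation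
`(R ⊗ Id)(Id ⊗ R)(R ⊗ Id) = (Id ⊗ R)(R ⊗ Id)(Id ⊗ R)` on `V_n ⊗ V_n ⊗ V_n`. -/
theorem stmt1 (K : Type*) [Field K] (q : K) (hq : q ≠ 0) (n : ℕ)
    (R : ((Fin n → K) ⊗[K] (Fin n → K)) →ₗ[K] ((Fin n → K) ⊗[K] (Fin n → K)))
    (hR : ∀ i j : Fin n,
      R (Pi.basisFun K (Fin n) i ⊗ₜ[K] Pi.basisFun K (Fin n) j) =
        if i < j then Pi.basisFun K (Fin n) j ⊗ₜ[K] Pi.basisFun K (Fin n) i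
        else if i = j then q • (Pi.basisFun K (Fin n) j ⊗ₜ[K] Pi.basisFun K (Fin n) i)
        else (q - q⁻¹) • (Pi.basisFun K (Fin n) i ⊗ₜ[K] Pi.basisFun K (Fin n) j)
              + Pi.basisFun K (Fin n) j ⊗ₜ[K] Pi.basisFun K (Fin n) i) :
    (LinearMap.rTensor (Fin n → K) R) ∘ₗ
        ((TensorProduct.assoc K (Fin n → K) (Fin n → K) (Fin n → K)).symm.toLinearMap ∘ₗ
          (LinearMap.lTensor (Fin n → K) R) ∘ₗ
          (TensorProduct.assoc K (Fin n → K) (Fin n → K) (Fin n → K)).toLinearMap) ∘ₗ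
        (LinearMap.rTensor (Fin n → K) R) =
      ((TensorProduct.assoc K (Fin n → K) (Fin n → K) (Fin n → K)).symm.toLinearMap ∘ₗ
          (LinearMap.lTensor (Fin n → K) R) ∘ₗ
          (TensorProduct.assoc K (Fin n → K) (Fin n → K) (Fin n → K)).toLinearMap) ∘ₗ
        (LinearMap.rTensor (Fin n → K) R) ∘ₗ
        ((TensorProduct.assoc K (Fin n → K) (Fin n → K) (Fin n → K)).symm.toLinearMap ∘ₗ
          (LinearMap.lTensor (Fin n → K) R) ∘ₗ
          (TensorProduct.assoc K (Fin n → K) (Fin n → K) (Fin n → K)).toLinearMap) :=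
  YangBaxter.IsStandardRMatrix.braidRelation (Pi.basisFun K (Fin n)) hq hR
end

section
/- On the quantum Koszul complex K (with product twisted by the braiding), the Koszul differential κ satisfies the q-Leibniz rule: for a ∈ K^i of polynomial degree d₁ and b ∈ K^j of polynomial degree d₂, κ(ab) = q^j κ(a)·b + (−q⁻¹)^{d₁−i} a·κ(b). -/
/-- Generators of the algebra `Ω(n) = S_q(V_n) ⊗ Λ_q(V_n)`: `Sum.inl i` stands for
`x_i = e_i ⊗ 1` (symmetric generator) and `Sum.inr i` for `y_i = 1 ⊗ e_i` (exterior
generator). -/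
abbrev OmegaLetter (n : ℕ) := Fin n ⊕ Fin n

/-- The defining relations of the algebra `Ω(n) = S_q(V_n) ⊗ Λ_q(V_n)` with product
twisted by the braiding (quantum de Rham algebra). -/
inductive omegaRel (K : Type*) [Field K] (q : K) (n : ℕ) :
    FreeAlgebra K (OmegaLetter n) → FreeAlgebra K (OmegaLetter n) → Prop
  | xx {i j : Fin n} (h : j < i) :
      omegaRel K q n (FreeAlgebra.ι K (Sum.inl i) * FreeAlgebra.ι K (Sum.inl j))
        (q • (FreeAlgebra.ι K (Sum.inl j) * FreeAlgebra.ι K (Sum.inl i)))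
  | yx_gt {i j : Fin n} (h : j < i) :
      omegaRel K q n (FreeAlgebra.ι K (Sum.inr j) * FreeAlgebra.ι K (Sum.inl i))
        (FreeAlgebra.ι K (Sum.inl i) * FreeAlgebra.ι K (Sum.inr j))
  | yx_eq (i : Fin n) :
      omegaRel K q n (FreeAlgebra.ι K (Sum.inr i) * FreeAlgebra.ι K (Sum.inl i))
        (q • (FreeAlgebra.ι K (Sum.inl i) * FreeAlgebra.ι K (Sum.inr i)))
  | yx_lt {i j : Fin n} (h : i < j) :
      omegaRel K q n (FreeAlgebra.ι K (Sum.inr j) * FreeAlgebra.ι K (Sum.inl i))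
        ((q - q⁻¹) • (FreeAlgebra.ι K (Sum.inl j) * FreeAlgebra.ι K (Sum.inr i)) +
          FreeAlgebra.ι K (Sum.inl i) * FreeAlgebra.ι K (Sum.inr j))
  | yy {i j : Fin n} (h : j < i) :
      omegaRel K q n (FreeAlgebra.ι K (Sum.inr i) * FreeAlgebra.ι K (Sum.inr j))
        ((-q⁻¹) • (FreeAlgebra.ι K (Sum.inr j) * FreeAlgebra.ι K (Sum.inr i)))
  | ysq (i : Fin n) :
      omegaRel K q n (FreeAlgebra.ι K (Sum.inr i) * FreeAlgebra.ι K (Sum.inr i)) 0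

/-- The algebra `Ω(n) = S_q(V_n) ⊗ Λ_q(V_n)` with braided product, presented by
generators and relations. -/
abbrev OmegaAlg (K : Type*) [Field K] (q : K) (n : ℕ) := RingQuot (omegaRel K q n)

namespace OmegaAlg

variable (K : Type*) [Field K] (q : K) (n : ℕ)

/-- The generators of `Ω(n)`. -/
noncomputable def gen (g : OmegaLetter n) : OmegaAlg K q n :=
  RingQuot.mkAlgHom K (omegaRel K q n) (FreeAlgebra.ι K g)

/-- The symmetric generator `x_i = e_i ⊗ 1`. -/
noncomputable def X (i : Fin n) : OmegaAlg K q n := gen K q n (Sum.inl i)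

/-- The exterior generator `y_i = 1 ⊗ e_i`. -/
noncomputable def Y (i : Fin n) : OmegaAlg K q n := gen K q n (Sum.inr i)

/-- The image in `Ω(n)` of a word in the generators. -/
noncomputable def wordProd (w : List (OmegaLetter n)) : OmegaAlg K q n :=
  (w.map (gen K q n)).prod

/-- The number of symmetric letters `x` in a word. -/
def countX (w : List (OmegaLetter n)) : ℕ := (w.filter Sum.isLeft).length

/-- The number of exterior letters `y` in a word. -/
def countY (w : List (OmegaLetter n)) : ℕ := (w.filter Sum.isRight).length

/-- The bigraded piece `Ω^i_d(n) = S_q^{d-i}(n) ⊗ Λ_q^i(n)`: the span of the words with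
`d` letters, `i` of which are exterior. -/
noncomputable def piece (i d : ℕ) : Submodule K (OmegaAlg K q n) :=
  Submodule.span K {a : OmegaAlg K q n | ∃ w : List (OmegaLetter n),
    w.length = d ∧ countY n w = i ∧ a = wordProd K q n w}

/-- The property that `δ` is the quantum de Rham differential: on the word monomials of
`Ω(n)` it deconcatenates one symmetric letter (with the appropriate braiding twist) and
multiplies it into the exterior factor, replacing one `x`-letter by the corresponding
`y`-letter. -/
def IsDeRham (δ : OmegaAlg K q n →ₗ[K] OmegaAlg K q n) : Prop :=
  ∀ w : List (OmegaLetter n),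
    δ (wordProd K q n w) =
      ∑ k : Fin w.length,
        Sum.elim
          (fun i : Fin n =>
            ((-q⁻¹) ^ countY n (w.take k) * q ^ countX n (w.drop (k + 1))) •
              wordProd K q n (w.set k (Sum.inr i)))
          (fun _ : Fin n => (0 : OmegaAlg K q n))
          (w.get k)

/-- The property that `κ` is the quantum Koszul differential: on the word monomials of
`Ω(n)` it deconcatenates one exterior letter (with the appropriate braiding twist) and
multiplies it into the symmetric factor, replacing one `y`-letter by the corresponding
`x`-letter. -/
def IsKoszul (κ : OmegaAlg K q n →ₗ[K] OmegaAlg K q n) : Prop :=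
  ∀ w : List (OmegaLetter n),
    κ (wordProd K q n w) =
      ∑ k : Fin w.length,
        Sum.elim
          (fun _ : Fin n => (0 : OmegaAlg K q n))
          (fun i : Fin n =>
            ((-q⁻¹) ^ countY n (w.take k) * q ^ countX n (w.drop (k + 1))) •
              wordProd K q n (w.set k (Sum.inl i)))
          (w.get k)

end OmegaAlg

/-- The bigraded piece `K^i_d(n) = S_q^i(n) ⊗ Λ_q^{d-i}(n)` of the Koszul complex: the
span of the words with `d` letters, `i` of which are symmetric. -/
noncomputable def OmegaAlg.koszulPiece (K : Type*) [Field K] (q : K) (n : ℕ)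
    (i d : ℕ) : Submodule K (OmegaAlg K q n) :=
  Submodule.span K {a : OmegaAlg K q n | ∃ w : List (OmegaLetter n),
    w.length = d ∧ OmegaAlg.countX n w = i ∧ a = OmegaAlg.wordProd K q n w}

/-! Both sides are bilinear in `(a, b)`, so it suffices to check the rule on word monomials.
By the defining formula, `κ` of a word starting with `x_j` is `x_j` times `κ` of the rest, while a
leading `y_j` contributes `q^{#x(rest)} x_j · rest` (the term where that letter is turned into
`x_j`) plus `-q⁻¹ y_j κ(rest)`. Induction on the first word then gives
`κ(w₁w₂) = q^{#x(w₂)} κ(w₁) w₂ + (-q⁻¹)^{#y(w₁)} w₁ κ(w₂)`, and `#y(w₁) = d₁ - i`. -/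

lemma LinearMap.map_mul_eq_of_mem_span {R A : Type*} [CommRing R] [Ring A] [Algebra R A]
    (κ : A →ₗ[R] A) (c₁ c₂ : R) {s t : Set A}
    (h : ∀ a ∈ s, ∀ b ∈ t, κ (a * b) = c₁ • (κ a * b) + c₂ • (a * κ b))
    {a b : A} (ha : a ∈ Submodule.span R s) (hb : b ∈ Submodule.span R t) :
    κ (a * b) = c₁ • (κ a * b) + c₂ • (a * κ b) := by
  let μ := LinearMap.mul R A
  let defect := μ.compr₂ κ - c₁ • μ.comp κ - c₂ • μ.compl₂ κ
  have hdefect (x y : A) : defect x y = κ (x * y) - c₁ • (κ x * y) - c₂ • (x * κ y) := rfl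
  have := LinearMap.BilinMap.apply_apply_mem_of_mem_span ⊥ s t defect
    (fun x hx y hy => by simp [hdefect, h x hx y hy]) a b ha hb
  rwa [Submodule.mem_bot, hdefect, sub_sub, sub_eq_zero] at this

-- `Fin.sum_univ_succ` for the index type `Fin (g :: w).length`, which `rw` does not
-- recognise as a successor.
lemma Fin.sum_univ_length_cons {α M : Type*} [AddCommMonoid M] (g : α) (w : List α)
    (f : Fin (g :: w).length → M) : ∑ k, f k = f 0 + ∑ k : Fin w.length, f k.succ :=
  Fin.sum_univ_succ f

namespace OmegaAlg

variable {K : Type*} [Field K] {q : K} {n : ℕ}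

lemma countX_add_countY (w : List (OmegaLetter n)) :
    countX n w + countY n w = w.length := by
  conv_rhs => rw [List.length_eq_length_filter_add Sum.isLeft]
  simp [countX, countY]

@[simp]
lemma countY_cons_inl (i : Fin n) (w : List (OmegaLetter n)) :
    countY n (Sum.inl i :: w) = countY n w := by
  simp [countY]

@[simp]
lemma countY_cons_inr (i : Fin n) (w : List (OmegaLetter n)) :
    countY n (Sum.inr i :: w) = countY n w + 1 := by
  simp [countY, List.filter_cons]

lemma countX_append (w₁ w₂ : List (OmegaLetter n)) :
    countX n (w₁ ++ w₂) = countX n w₁ + countX n w₂ := by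
  simp [countX]

lemma wordProd_cons (g : OmegaLetter n) (w : List (OmegaLetter n)) :
    wordProd K q n (g :: w) = gen K q n g * wordProd K q n w := by
  simp [wordProd]

lemma wordProd_append (w₁ w₂ : List (OmegaLetter n)) :
    wordProd K q n (w₁ ++ w₂) = wordProd K q n w₁ * wordProd K q n w₂ := by
  simp [wordProd]

section Koszul

variable {κ : OmegaAlg K q n →ₗ[K] OmegaAlg K q n} (hκ : IsKoszul K q n κ)
include hκ

lemma IsKoszul.map_one : κ 1 = 0 := by
  simpa [wordProd] using hκ []

lemma IsKoszul.map_wordProd_cons_inl (j : Fin n) (w : List (OmegaLetter n)) :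
    κ (wordProd K q n (Sum.inl j :: w)) = gen K q n (Sum.inl j) * κ (wordProd K q n w) := by
  rw [hκ, hκ, Fin.sum_univ_length_cons, Finset.mul_sum]
  simp only [List.get_eq_getElem, Fin.val_succ, Fin.val_zero, List.getElem_cons_zero,
    List.getElem_cons_succ, Sum.elim_inl, zero_add, List.take_succ_cons, List.drop_succ_cons,
    List.set_cons_succ, countY_cons_inl, wordProd_cons]
  refine Finset.sum_congr rfl fun k _ => ?_
  cases w[(k : ℕ)] <;> simp

lemma IsKoszul.map_wordProd_cons_inr (j : Fin n) (w : List (OmegaLetter n)) :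
    κ (wordProd K q n (Sum.inr j :: w)) =
      q ^ countX n w • (gen K q n (Sum.inl j) * wordProd K q n w) +
        (-q⁻¹) • (gen K q n (Sum.inr j) * κ (wordProd K q n w)) := by
  rw [hκ, hκ, Fin.sum_univ_length_cons, Finset.mul_sum, Finset.smul_sum]
  simp only [List.get_eq_getElem, Fin.val_succ, Fin.val_zero, List.getElem_cons_zero,
    List.getElem_cons_succ, Sum.elim_inr, List.take_succ_cons, List.drop_succ_cons,
    List.set_cons_succ, List.set_cons_zero, List.take_zero, List.drop_zero, countY_cons_inr,
    wordProd_cons]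
  congr 1
  · simp [countY]
  refine Finset.sum_congr rfl fun k _ => ?_
  rcases w[(k : ℕ)] with i | i
  · simp
  · rw [Sum.elim_inr, Sum.elim_inr, mul_smul_comm, smul_smul]
    ring_nf

lemma IsKoszul.map_wordProd_append (w₁ w₂ : List (OmegaLetter n)) :
    κ (wordProd K q n (w₁ ++ w₂)) =
      q ^ countX n w₂ • (κ (wordProd K q n w₁) * wordProd K q n w₂) +
        (-q⁻¹) ^ countY n w₁ • (wordProd K q n w₁ * κ (wordProd K q n w₂)) := by
  induction w₁ with
  | nil => simp [wordProd, hκ.map_one, countY]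
  | cons g t ih =>
    rcases g with i | i
    · rw [List.cons_append, hκ.map_wordProd_cons_inl, ih, hκ.map_wordProd_cons_inl,
        countY_cons_inl, wordProd_cons]
      simp only [mul_add, mul_smul_comm, mul_assoc]
    · rw [List.cons_append, hκ.map_wordProd_cons_inr, ih, hκ.map_wordProd_cons_inr,
        countY_cons_inr, countX_append, wordProd_append, wordProd_cons]
      simp only [mul_add, add_mul, smul_mul_assoc, mul_smul_comm, mul_assoc]
      module

end Koszul

end OmegaAlg

theorem stmt9_general (K : Type*) [Field K] (q : K) (n : ℕ)
    (κ : OmegaAlg K q n →ₗ[K] OmegaAlg K q n) (hκ : OmegaAlg.IsKoszul K q n κ)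
    (i d₁ j d₂ : ℕ)
    (a b : OmegaAlg K q n)
    (ha : a ∈ OmegaAlg.koszulPiece K q n i d₁)
    (hb : b ∈ OmegaAlg.koszulPiece K q n j d₂) :
    κ (a * b) = q ^ j • (κ a * b) + (-q⁻¹) ^ (d₁ - i) • (a * κ b) := by
  refine κ.map_mul_eq_of_mem_span _ _ ?_ ha hb
  rintro _ ⟨w₁, hlen₁, hx₁, rfl⟩ _ ⟨w₂, -, hx₂, rfl⟩
  have hy₁ : OmegaAlg.countY n w₁ = d₁ - i := by
    have := OmegaAlg.countX_add_countY w₁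
    omega
  rw [← OmegaAlg.wordProd_append, hκ.map_wordProd_append, hx₂, hy₁]

/-- **q-Leibniz rule for the Koszul differential.** On the quantum Koszul
complex `K` (with product twisted by the braiding), the Koszul differential `κ`
satisfies: for `a ∈ K^i` of polynomial degree `d₁` and `b ∈ K^j` of polynomial degree
`d₂`, `κ(ab) = q^j κ(a)·b + (−q⁻¹)^{d₁−i} a·κ(b)`. -/
theorem stmt9 (K : Type*) [Field K] (q : K) (hq : q ≠ 0) (n : ℕ)
    (κ : OmegaAlg K q n →ₗ[K] OmegaAlg K q n) (hκ : OmegaAlg.IsKoszul K q n κ)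
    (i d₁ j d₂ : ℕ) (hi : i ≤ d₁) (hj : j ≤ d₂)
    (a b : OmegaAlg K q n)
    (ha : a ∈ OmegaAlg.koszulPiece K q n i d₁)
    (hb : b ∈ OmegaAlg.koszulPiece K q n j d₂) :
    κ (a * b) = q ^ j • (κ a * b) + (-q⁻¹) ^ (d₁ - i) • (a * κ b) :=
  stmt9_general K q n κ hκ i d₁ j d₂ a b ha hb
end

section
/- In the algebra Ω(n) = S_q(V_n) ⊗ Λ_q(V_n) with multiplication twisted by the braiding, the elements x_i = e_i^ℓ ⊗ 1 and y_i = e_i^{ℓ−1} ⊗ e_i satisfy the classical (super)commutation relations: x_i x_j = x_j x_i, y_j x_i = x_i y_j, y_i y_j = −y_j y_i, and y_i² = 0, for all i, j, where q is a primitive ℓ-th root of unity with ℓ > 1 odd. -/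
namespace OmegaAlg
variable (K : Type*) [Field K] (q : K) (n : ℕ)

lemma rel_xx {i j : Fin n} (h : j < i) :
    X K q n i * X K q n j = q • (X K q n j * X K q n i) := by
  simpa [X, gen, map_mul] using RingQuot.mkAlgHom_rel K (omegaRel.xx (K := K) (q := q) h)

lemma rel_yx_gt {i j : Fin n} (h : j < i) :
    Y K q n j * X K q n i = X K q n i * Y K q n j := by
  simpa [X, Y, gen, map_mul] using RingQuot.mkAlgHom_rel K (omegaRel.yx_gt (K := K) (q := q) h)

lemma rel_yx_eq (i : Fin n) :
    Y K q n i * X K q n i = q • (X K q n i * Y K q n i) := by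
  simpa [X, Y, gen, map_mul] using RingQuot.mkAlgHom_rel K (omegaRel.yx_eq (K := K) (q := q) (n := n) i)

lemma rel_yx_lt {i j : Fin n} (h : i < j) :
    Y K q n j * X K q n i =
      (q - q⁻¹) • (X K q n j * Y K q n i) + X K q n i * Y K q n j := by
  simpa [X, Y, gen, map_mul] using RingQuot.mkAlgHom_rel K (omegaRel.yx_lt (K := K) (q := q) h)

lemma rel_yy {i j : Fin n} (h : j < i) :
    Y K q n i * Y K q n j = (-q⁻¹) • (Y K q n j * Y K q n i) := by
  simpa only [Y, gen, map_mul, map_smul] using RingQuot.mkAlgHom_rel K (omegaRel.yy (K := K) (q := q) h)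

lemma rel_ysq (i : Fin n) : Y K q n i * Y K q n i = 0 := by
  simpa [Y, gen, map_mul] using RingQuot.mkAlgHom_rel K (omegaRel.ysq (K := K) (q := q) (n := n) i)

lemma xx_pow {i j : Fin n} (h : j < i) (m : ℕ) :
    X K q n i * X K q n j ^ m = q ^ m • (X K q n j ^ m * X K q n i) := by
  induction m with
  | zero => simp
  | succ m ih =>
    rw [pow_succ, ← mul_assoc, ih, smul_mul_assoc, mul_assoc, rel_xx K q n h,
      mul_smul_comm, smul_smul, ← pow_succ, ← mul_assoc, ← pow_succ]

lemma xx_pow_pow {i j : Fin n} (h : j < i) (k m : ℕ) :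
    X K q n i ^ k * X K q n j ^ m = (q ^ (k * m)) • (X K q n j ^ m * X K q n i ^ k) := by
  induction k with
  | zero => simp
  | succ k ih =>
    rw [pow_succ, mul_assoc, xx_pow K q n h, mul_smul_comm, ← mul_assoc, ih,
      smul_mul_assoc, smul_smul, mul_assoc, ← pow_succ, ← pow_add]
    ring_nf

lemma yx_gt_pow {i j : Fin n} (h : j < i) (m : ℕ) :
    Y K q n j * X K q n i ^ m = X K q n i ^ m * Y K q n j := by
  induction m with
  | zero => simp
  | succ m ih =>
    rw [pow_succ, ← mul_assoc, ih, mul_assoc, rel_yx_gt K q n h, ← mul_assoc, ← pow_succ]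

lemma yx_eq_pow (i : Fin n) (m : ℕ) :
    Y K q n i * X K q n i ^ m = q ^ m • (X K q n i ^ m * Y K q n i) := by
  induction m with
  | zero => simp
  | succ m ih =>
    rw [pow_succ, ← mul_assoc, ih, smul_mul_assoc, mul_assoc, rel_yx_eq,
      mul_smul_comm, smul_smul, ← pow_succ, ← mul_assoc, ← pow_succ]

lemma yx_lt_pow (hq0 : q ≠ 0) {i j : Fin n} (h : i < j) (m : ℕ) :
    Y K q n j * X K q n i ^ (m + 1) =
      (q⁻¹ * (q ^ (2 * (m + 1)) - 1)) • (X K q n i ^ m * X K q n j * Y K q n i) +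
        X K q n i ^ (m + 1) * Y K q n j := by
  induction m with
  | zero =>
    rw [pow_one, pow_zero, one_mul, rel_yx_lt K q n h]
    congr 1
    field_simp
  | succ m ih =>
    rw [pow_succ, ← mul_assoc, ih, add_mul, smul_mul_assoc, mul_assoc, mul_assoc,
      rel_yx_eq, mul_assoc, rel_yx_lt K q n h]
    rw [mul_smul_comm, mul_smul_comm, smul_smul, mul_add]
    rw [show X K q n j * (X K q n i * Y K q n i) =
      q • (X K q n i * (X K q n j * Y K q n i)) by
        rw [← mul_assoc, rel_xx K q n h, smul_mul_assoc, mul_assoc]]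
    simp only [mul_add, mul_smul_comm, smul_mul_assoc, smul_smul, mul_assoc, pow_succ]
    match_scalars <;> field_simp <;> ring

lemma sq_zero (i : Fin n) (m : ℕ) :
    (X K q n i ^ m * Y K q n i) * (X K q n i ^ m * Y K q n i) = 0 := by
  rw [mul_assoc, ← mul_assoc (Y K q n i), yx_eq_pow]
  simp [smul_mul_assoc, mul_smul_comm, mul_assoc, rel_ysq]

lemma x_pow_comm (i j : Fin n) (a b : ℕ) (h1 : q ^ (a * b) = 1) :
    X K q n i ^ a * X K q n j ^ b = X K q n j ^ b * X K q n i ^ a := by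
  rcases lt_trichotomy i j with h | h | h
  · rw [xx_pow_pow K q n h b a, mul_comm b a, h1, one_smul]
  · subst h; exact pow_mul_comm _ _ _
  · rw [xx_pow_pow K q n h a b, h1, one_smul]

lemma y_x_pow_comm {ℓ : ℕ} (hℓ : 1 ≤ ℓ) (hq0 : q ≠ 0) (hq1 : q ^ ℓ = 1) (i j : Fin n) :
    Y K q n j * X K q n i ^ ℓ = X K q n i ^ ℓ * Y K q n j := by
  rcases lt_trichotomy i j with h | h | h
  · obtain ⟨m, rfl⟩ : ∃ m, ℓ = m + 1 := ⟨ℓ - 1, by omega⟩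
    rw [yx_lt_pow K q n hq0 h m]
    have : q ^ (2 * (m + 1)) = 1 := by
      rw [mul_comm, pow_mul, hq1, one_pow]
    rw [this]
    simp
  · subst h; rw [yx_eq_pow, hq1, one_smul]
  · exact yx_gt_pow K q n h _

lemma pre_anticomm {a b : Fin n} (h : a < b) (m : ℕ) (hq0 : q ≠ 0)
    (hq1 : q ^ (m + 2) = 1) :
    (X K q n b ^ (m + 1) * Y K q n b) * (X K q n a ^ (m + 1) * Y K q n a) =
      -((X K q n a ^ (m + 1) * Y K q n a) * (X K q n b ^ (m + 1) * Y K q n b)) := by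
  have hqq : q ^ ((m + 1) * (m + 1)) = q := by
    rw [show (m + 1) * (m + 1) = (m + 2) * m + 1 by ring, pow_succ, pow_mul, hq1,
      one_pow, one_mul]
  rw [mul_assoc, ← mul_assoc (Y K q n b), yx_lt_pow K q n hq0 h m, add_mul,
    smul_mul_assoc]
  rw [mul_assoc (X K q n a ^ m * X K q n b), rel_ysq, mul_zero, smul_zero, zero_add]
  rw [mul_assoc (X K q n a ^ (m + 1)), rel_yy K q n h, mul_smul_comm, mul_smul_comm,
    ← mul_assoc (X K q n b ^ (m + 1)), xx_pow_pow K q n h, hqq]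
  rw [mul_assoc, ← mul_assoc (Y K q n a), yx_gt_pow K q n h, mul_assoc, ← mul_assoc]
  simp only [smul_mul_assoc, smul_smul, mul_assoc]
  rw [show -q⁻¹ * q = -1 by field_simp, neg_one_smul]

end OmegaAlg

/-- In the algebra `Ω(n) = S_q(V_n) ⊗ Λ_q(V_n)` with multiplication
twisted by the braiding, the elements `x_i = e_i^ℓ ⊗ 1` and `y_i = e_i^{ℓ−1} ⊗ e_i`
satisfy the classical (super)commutation relations: `x_i x_j = x_j x_i`,
`y_j x_i = x_i y_j`, `y_i y_j = −y_j y_i`, and `y_i² = 0`, for all `i, j`, where `q` is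
a primitive `ℓ`-th root of unity with `ℓ > 1` odd. -/
theorem stmt13 (K : Type*) [Field K] (q : K) (ℓ : ℕ) (hℓ : 1 < ℓ) (hodd : Odd ℓ)
    (hq : IsPrimitiveRoot q ℓ) (n : ℕ) (i j : Fin n) :
    (OmegaAlg.X K q n i ^ ℓ) * (OmegaAlg.X K q n j ^ ℓ) =
        (OmegaAlg.X K q n j ^ ℓ) * (OmegaAlg.X K q n i ^ ℓ) ∧
    (OmegaAlg.X K q n j ^ (ℓ - 1) * OmegaAlg.Y K q n j) * (OmegaAlg.X K q n i ^ ℓ) =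
        (OmegaAlg.X K q n i ^ ℓ) * (OmegaAlg.X K q n j ^ (ℓ - 1) * OmegaAlg.Y K q n j) ∧
    (OmegaAlg.X K q n i ^ (ℓ - 1) * OmegaAlg.Y K q n i) *
          (OmegaAlg.X K q n j ^ (ℓ - 1) * OmegaAlg.Y K q n j) =
        -((OmegaAlg.X K q n j ^ (ℓ - 1) * OmegaAlg.Y K q n j) *
          (OmegaAlg.X K q n i ^ (ℓ - 1) * OmegaAlg.Y K q n i)) ∧
    (OmegaAlg.X K q n i ^ (ℓ - 1) * OmegaAlg.Y K q n i) *
        (OmegaAlg.X K q n i ^ (ℓ - 1) * OmegaAlg.Y K q n i) = 0 := by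
  have hq1 : q ^ ℓ = 1 := hq.pow_eq_one
  have hq0 : q ≠ 0 := by
    intro h
    rw [h, zero_pow (by omega)] at hq1
    exact zero_ne_one hq1
  have hpow : ∀ a b : ℕ, ℓ ∣ a * b → q ^ (a * b) = 1 := fun a b hab => by
    obtain ⟨c, hc⟩ := hab
    rw [hc, pow_mul, hq1, one_pow]
  refine ⟨OmegaAlg.x_pow_comm K q n i j ℓ ℓ (hpow ℓ ℓ ⟨ℓ, rfl⟩), ?_, ?_, ?_⟩
  · rw [mul_assoc, OmegaAlg.y_x_pow_comm K q n (by omega) hq0 hq1, ← mul_assoc,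
      ← OmegaAlg.x_pow_comm K q n i j ℓ (ℓ - 1)
        (hpow ℓ (ℓ - 1) ⟨ℓ - 1, rfl⟩), mul_assoc]
  · rcases lt_trichotomy i j with h | h | h
    · obtain ⟨m, hm⟩ : ∃ m, ℓ = m + 2 := ⟨ℓ - 2, by omega⟩
      have := OmegaAlg.pre_anticomm K q n h m hq0 (by rw [← hm]; exact hq1)
      rw [show ℓ - 1 = m + 1 by omega, this, neg_neg]
    · subst h
      simp [OmegaAlg.sq_zero]
    · obtain ⟨m, hm⟩ : ∃ m, ℓ = m + 2 := ⟨ℓ - 2, by omega⟩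
      rw [show ℓ - 1 = m + 1 by omega]
      exact OmegaAlg.pre_anticomm K q n h m hq0 (by rw [← hm]; exact hq1)
  · exact OmegaAlg.sq_zero K q n i (ℓ - 1)
end
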